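/- arXiv:0901.0805 — 5 statements merged into one kernel-verified Lean document; each statement's English description precedes it below -/
import Mathlib

section
/- Let $G$ be a finite group, $p$ a prime, $H$ a strongly $p$-embedded subgroup of $G$, and $K \le G$ a subgroup with $K \not\le H$ such that $p$ divides $|H \cap K|$. Then $H \cap K$ is a strongly $p$-embedded subgroup of $K$. -/
/-- The conjugate subgroup `g H g⁻¹`. -/
def conjSub {G : Type*} [Group G] (g : G) (H : Subgroup G) : Subgroup G :=
  Subgroup.map (MulAut.conj g).toMonoidHom H

/-- `H` is a strongly `p`-embedded subgroup of `G` : `H < G`, `p` divides `|H|`, and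
`p` does not divide `|H ∩ H^g|` for every `g ∈ G \ H`. -/
def IsStronglyPEmbedded {G : Type*} [Group G] (p : ℕ) (H : Subgroup G) : Prop :=
  H ≠ ⊤ ∧ (p ∣ Nat.card H) ∧ ∀ g : G, g ∉ H → ¬ (p ∣ Nat.card ↥(H ⊓ conjSub g H))

/-- `M` is a strongly `p`-embedded subgroup of the subgroup `K`. -/
def IsStronglyPEmbeddedIn {G : Type*} [Group G] (p : ℕ) (M K : Subgroup G) : Prop :=
  M ≤ K ∧ M ≠ K ∧ (p ∣ Nat.card M) ∧
    ∀ g ∈ K, g ∉ M → ¬ (p ∣ Nat.card ↥(M ⊓ conjSub g M))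

section

variable {G : Type*} [Group G]

theorem conjSub_mono (g : G) {H K : Subgroup G} (h : H ≤ K) : conjSub g H ≤ conjSub g K :=
  Subgroup.map_mono h

theorem inf_conjSub_inf_le (g : G) (H K : Subgroup G) :
    H ⊓ K ⊓ conjSub g (H ⊓ K) ≤ H ⊓ conjSub g H :=
  inf_le_inf inf_le_left (conjSub_mono g inf_le_left)

end

theorem inter_strongly_p_embedded_general {G : Type*} [Group G]
    (p : ℕ) (H : Subgroup G) (hH : IsStronglyPEmbedded p H)
    (K : Subgroup G) (hKH : ¬ K ≤ H) (hdvd : p ∣ Nat.card ↥(H ⊓ K)) :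
    IsStronglyPEmbeddedIn p (H ⊓ K) K := by
  obtain ⟨-, -, hH_disjoint⟩ := hH
  refine ⟨inf_le_right, fun hHK => hKH (hHK ▸ inf_le_left), hdvd, ?_⟩
  intro g hgK hg hp_dvd
  have hgH : g ∉ H := fun hgH => hg ⟨hgH, hgK⟩
  exact hH_disjoint g hgH (hp_dvd.trans (Subgroup.card_dvd_of_le (inf_conjSub_inf_le g H K)))

theorem inter_strongly_p_embedded {G : Type*} [Group G] [Finite G]
    (p : ℕ) (hp : p.Prime) (H : Subgroup G) (hH : IsStronglyPEmbedded p H)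
    (K : Subgroup G) (hKH : ¬ K ≤ H) (hdvd : p ∣ Nat.card ↥(H ⊓ K)) :
    IsStronglyPEmbeddedIn p (H ⊓ K) K :=
  inter_strongly_p_embedded_general p H hH K hKH hdvd
end

section
/- Let $G$ be a finite group, $p$ a prime, $H$ a strongly $p$-embedded subgroup of $G$, and set $\overline{G} = G/O_{p'}(G)$. Assume $\overline{H} \ne \overline{G}$ (where $\overline{H}$ is the image of $H$). Then $\overline{H}$ is a strongly $p$-embedded subgroup of $\overline{G}$. -/
/-- `O_{p'}(G)`, the largest normal `p'`-subgroup of `G`. -/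
def pPrimeCore (p : ℕ) (G : Type*) [Group G] : Subgroup G :=
  sSup {N : Subgroup G | N.Normal ∧ ¬ (p ∣ Nat.card N)}


theorem conjSub_of_normal {G : Type*} [Group G] (g : G) {N : Subgroup G} (hN : N.Normal) :
    conjSub g N = N := by
  apply le_antisymm
  · rintro x ⟨n, hn, rfl⟩
    exact hN.conj_mem n hn g
  · intro x hx
    exact ⟨g⁻¹ * x * g, by simpa using hN.conj_mem x hx g⁻¹,
      by simp [MulAut.conj_apply]; group⟩

theorem sSup_normal {G : Type*} [Group G] (S : Set (Subgroup G)) (hS : ∀ N ∈ S, N.Normal) :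
    (sSup S).Normal := by
  constructor
  intro n hn g
  have hmap : conjSub g (sSup S) = sSup S := by
    unfold conjSub
    rw [(Subgroup.gc_map_comap (MulAut.conj g).toMonoidHom).l_sSup]
    have h : ∀ N ∈ S, Subgroup.map (MulAut.conj g).toMonoidHom N = N := fun N hN =>
      conjSub_of_normal g (hS N hN)
    calc (⨆ N ∈ S, Subgroup.map (MulAut.conj g).toMonoidHom N) = ⨆ N ∈ S, N := by
          apply le_antisymm
          · exact iSup₂_le fun N hN => (h N hN).le.trans (le_iSup₂ (f := fun N _ => N) N hN)
          · exact iSup₂_le fun N hN => (h N hN).ge.trans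
              (le_iSup₂ (f := fun N _ => Subgroup.map (MulAut.conj g).toMonoidHom N) N hN)
      _ = sSup S := by rw [sSup_eq_iSup]
  have hmem : (MulAut.conj g).toMonoidHom n ∈ conjSub g (sSup S) :=
    Subgroup.mem_map_of_mem _ hn
  rw [hmap] at hmem
  simpa [MulAut.conj_apply] using hmem

instance pPrimeCore_normal (p : ℕ) (G : Type*) [Group G] : (pPrimeCore p G).Normal :=
  sSup_normal _ (fun _ h => h.1)

/-!
Let `N = O_{p'}(G)` and `π : G → G/N`. Since `p ∤ |N|` and `|H|` divides `|π H| * |N|`,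
`p` divides `|π H|`. Suppose `π g ∉ π H` while `π H ∩ (π H)^{π g}` contains a subgroup `P` of
order `p`. Then `L = π⁻¹ P` has order `p * |N|`, so its subgroups of order `p` are its Sylow
subgroups. Both `H ∩ L` and `H^g ∩ L` map onto `P`, hence contain subgroups `T` and `S` of
order `p`, and Sylow's theorem in `L` gives `m ∈ L` with `T^m = S ≤ H^g`. So `p` divides
`|H ∩ H^{m⁻¹ g}|`, whence `m⁻¹ g ∈ H`, and `π g = π m * π (m⁻¹ g) ∈ π H` because `π m ∈ P ≤ π H`.
-/

open Subgroup Pointwise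

section conjugate
variable {G : Type*} [Group G]

lemma conjSub_eq_smul (g : G) (H : Subgroup G) : conjSub g H = MulAut.conj g • H := rfl

lemma map_conjSub {Q : Type*} [Group Q] (f : G →* Q) (g : G) (H : Subgroup G) :
    (conjSub g H).map f = conjSub (f g) (H.map f) := by
  simp only [conjSub, map_map]
  congr 1
  ext
  simp [MulAut.conj_apply]

lemma le_conjSub_inv_mul_of_conjSub_le {m g : G} {T H : Subgroup G}
    (h : conjSub m T ≤ conjSub g H) : T ≤ conjSub (m⁻¹ * g) H := by
  rw [conjSub_eq_smul, conjSub_eq_smul] at h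
  rwa [conjSub_eq_smul, map_mul, mul_smul, map_inv,
    ← pointwise_smul_le_pointwise_smul_iff (a := MulAut.conj m), smul_inv_smul]

end conjugate

section card
variable {G : Type*} [Group G]

lemma card_subgroupOf_of_le {P L : Subgroup G} (h : P ≤ L) :
    Nat.card (P.subgroupOf L) = Nat.card P :=
  Nat.card_congr (subgroupOfEquivOfLe h).toEquiv

lemma card_dvd_card_inf_comap_of_le_map {Q : Type*} [Group Q] (f : G →* Q) {K : Subgroup Q}
    {X : Subgroup G} (hK : K ≤ X.map f) : Nat.card K ∣ Nat.card ↥(X ⊓ K.comap f) := by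
  have hle : K ≤ (X ⊓ K.comap f).map f := by
    intro k hk
    obtain ⟨x, hx, rfl⟩ := hK hk
    exact mem_map_of_mem f ⟨hx, hk⟩
  exact (card_dvd_of_le hle).trans (card_map_dvd _ _)

variable [Finite G]

lemma exists_le_card_eq_prime {p : ℕ} (hp : p.Prime) {A : Subgroup G}
    (hA : p ∣ Nat.card A) : ∃ T ≤ A, Nat.card T = p := by
  have := Fact.mk hp
  obtain ⟨T, hT⟩ := Sylow.exists_subgroup_card_pow_prime p (n := 1) (by rwa [pow_one])
  refine ⟨T.map A.subtype, map_subtype_le T, ?_⟩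
  rw [card_map_of_injective A.subtype_injective, hT, pow_one]

lemma exists_mem_conjSub_eq_of_card_eq {p : ℕ} [Fact p.Prime] {L P Q : Subgroup G}
    (hPL : P ≤ L) (hQL : Q ≤ L) (hP : Nat.card P = p ^ (Nat.card L).factorization p)
    (hQ : Nat.card Q = p ^ (Nat.card L).factorization p) : ∃ m ∈ L, conjSub m P = Q := by
  let P' := Sylow.ofCard (P.subgroupOf L) (by rwa [card_subgroupOf_of_le hPL])
  let Q' := Sylow.ofCard (Q.subgroupOf L) (by rwa [card_subgroupOf_of_le hQL])
  obtain ⟨m, hm⟩ := MulAction.exists_smul_eq L P' Q'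
  refine ⟨m, m.2, ?_⟩
  calc conjSub (m : G) P = conjSub (L.subtype m) ((P.subgroupOf L).map L.subtype) := by
        rw [map_subgroupOf_eq_of_le hPL]; rfl
    _ = (conjSub m (P.subgroupOf L)).map L.subtype := (map_conjSub _ _ _).symm
    _ = ((m • P' : Sylow p L) : Subgroup L).map L.subtype := by
        rw [Sylow.coe_subgroup_smul]; rfl
    _ = Q := by rw [hm]; exact map_subgroupOf_eq_of_le hQL

end card

section quotient
variable {G : Type*} [Group G] [Finite G] {N : Subgroup G} [N.Normal]

open QuotientGroup

lemma card_comap_mk' (K : Subgroup (G ⧸ N)) :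
    Nat.card (K.comap (mk' N)) = Nat.card K * Nat.card N := by
  have hi : (K.comap (mk' N)).index = K.index := index_comap_of_surjective _ (mk'_surjective N)
  refine Nat.eq_of_mul_eq_mul_right (Nat.pos_of_ne_zero (index_ne_zero_of_finite (H := K))) ?_
  rw [← hi, card_mul_index, hi, mul_right_comm, card_mul_index,
    ← card_eq_card_quotient_mul_card_subgroup]

lemma card_dvd_card_map_mk'_mul_card (K : Subgroup G) :
    Nat.card K ∣ Nat.card (K.map (mk' N)) * Nat.card N :=
  card_comap_mk' (N := N) _ ▸ card_dvd_of_le (le_comap_map _ K)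

lemma not_dvd_card_sup_of_normal {p : ℕ} (hp : p.Prime) {A : Subgroup G}
    (hA : ¬ p ∣ Nat.card A) (hN : ¬ p ∣ Nat.card N) : ¬ p ∣ Nat.card ↥(A ⊔ N) := by
  have hdvd : Nat.card ↥(A ⊔ N) ∣ Nat.card A * Nat.card N := by
    rw [sup_comm, ← comap_map_mk', card_comap_mk']
    exact mul_dvd_mul_right (card_map_dvd _ _) _
  intro h
  exact (hp.dvd_mul.mp (h.trans hdvd)).elim hA hN

lemma exists_conjSub_le_of_le_map {p : ℕ} (hp : p.Prime) (hN : ¬ p ∣ Nat.card N)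
    {P : Subgroup (G ⧸ N)} (hP : Nat.card P = p) {A B : Subgroup G}
    (hA : P ≤ A.map (mk' N)) (hB : P ≤ B.map (mk' N)) :
    ∃ m, mk' N m ∈ P ∧ ∃ T ≤ A, Nat.card T = p ∧ conjSub m T ≤ B := by
  have := Fact.mk hp
  have hSylow : p ^ (Nat.card (P.comap (mk' N))).factorization p = p := by
    rw [card_comap_mk', hP, Nat.factorization_mul hp.ne_zero Nat.card_pos.ne', Finsupp.add_apply,
      hp.factorization_self, Nat.factorization_eq_zero_of_not_dvd hN, pow_one]
  obtain ⟨T, hTA, hT⟩ := exists_le_card_eq_prime hp (hP ▸ card_dvd_card_inf_comap_of_le_map _ hA)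
  obtain ⟨S, hSB, hS⟩ := exists_le_card_eq_prime hp (hP ▸ card_dvd_card_inf_comap_of_le_map _ hB)
  obtain ⟨m, hm, hmT⟩ := exists_mem_conjSub_eq_of_card_eq (hTA.trans inf_le_right)
    (hSB.trans inf_le_right) (hT.trans hSylow.symm) (hS.trans hSylow.symm)
  exact ⟨m, hm, T, hTA.trans inf_le_left, hT, hmT ▸ hSB.trans inf_le_left⟩

end quotient

lemma not_dvd_card_pPrimeCore {G : Type*} [Group G] [Finite G] {p : ℕ} (hp : p.Prime) :
    ¬ p ∣ Nat.card (pPrimeCore p G) := by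
  have hsup : SupClosed {N : Subgroup G | N.Normal ∧ ¬ p ∣ Nat.card N} := by
    rintro A ⟨hAn, hA⟩ B ⟨hBn, hB⟩
    have := hAn; have := hBn
    exact ⟨sup_normal A B, not_dvd_card_sup_of_normal hp hA hB⟩
  have hbot : (⊥ : Subgroup G) ∈ {N : Subgroup G | N.Normal ∧ ¬ p ∣ Nat.card N} :=
    ⟨normal_bot, by rw [card_bot]; exact hp.not_dvd_one⟩
  exact (hsup.sSup_mem (Set.toFinite _) hbot subset_rfl).2

open QuotientGroup in
theorem quotient_strongly_p_embedded {G : Type*} [Group G] [Finite G]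
    (p : ℕ) (hp : p.Prime) (H : Subgroup G) (hH : IsStronglyPEmbedded p H)
    (hne : Subgroup.map (QuotientGroup.mk' (pPrimeCore p G)) H ≠ ⊤) :
    IsStronglyPEmbedded p (Subgroup.map (QuotientGroup.mk' (pPrimeCore p G)) H) := by
  set N := pPrimeCore p G
  have hN : ¬ p ∣ Nat.card N := not_dvd_card_pPrimeCore hp
  have hdvd_map : p ∣ Nat.card (H.map (mk' N)) :=
    (hp.dvd_mul.mp (hH.2.1.trans (card_dvd_card_map_mk'_mul_card H))).resolve_right hN
  refine ⟨hne, hdvd_map, ?_⟩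
  intro x hx hdvd
  obtain ⟨g, rfl⟩ := mk'_surjective N x
  rw [← map_conjSub] at hdvd
  obtain ⟨P, hPle, hP⟩ := exists_le_card_eq_prime hp hdvd
  obtain ⟨m, hmP, T, hTH, hT, hmT⟩ :=
    exists_conjSub_le_of_le_map hp hN hP (hPle.trans inf_le_left) (hPle.trans inf_le_right)
  have hmg : m⁻¹ * g ∈ H := by
    by_contra h
    exact hH.2.2 _ h (hT ▸ card_dvd_of_le (le_inf hTH (le_conjSub_inv_mul_of_conjSub_le hmT)))
  apply hx
  rw [← mul_inv_cancel_left m g, map_mul]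
  exact mul_mem ((hPle.trans inf_le_left) hmP) (mem_map_of_mem _ hmg)
end

section
/- Let $p$ be an odd prime, $G$ a finite group, and $H$ a strongly $p$-embedded subgroup of $G$. Assume that for every involution $t \in H$, $p$ divides $|C_H(t)|$. Then for every involution $t \in H$, $t^G \cap H = t^H$; that is, any two $G$-conjugate involutions of $H$ are already conjugate in $H$. -/
section

variable {G : Type*} [Group G]

lemma mem_conjSub_iff {g x : G} {H : Subgroup G} : x ∈ conjSub g H ↔ g⁻¹ * x * g ∈ H := by
  constructor
  · rintro ⟨y, hy, rfl⟩
    simpa [mul_assoc] using hy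
  · intro h
    exact ⟨g⁻¹ * x * g, h, by simp [mul_assoc]⟩

lemma exists_mem_orderOf_eq_of_dvd_card [Finite G] {p : ℕ} [Fact p.Prime] {K : Subgroup G}
    (hK : p ∣ Nat.card K) : ∃ x ∈ K, orderOf x = p := by
  obtain ⟨x, hx⟩ := exists_prime_orderOf_dvd_card' p hK
  exact ⟨x, x.2, by rw [Subgroup.orderOf_coe, hx]⟩

lemma orderOf_conj (g x : G) : orderOf (g * x * g⁻¹) = orderOf x :=
  MulEquiv.orderOf_eq (MulAut.conj g) x

lemma conj_mem_centralizer_conj {g x t : G} (hx : x ∈ Subgroup.centralizer {t}) :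
    g * x * g⁻¹ ∈ Subgroup.centralizer {g * t * g⁻¹} := by
  rw [Subgroup.mem_centralizer_singleton_iff] at hx ⊢
  simp only [mul_assoc, inv_mul_cancel_left]
  rw [← mul_assoc x, hx, mul_assoc]

lemma exists_conj_mem_common_pSubgroup [Finite G] {p : ℕ} [Fact p.Prime] (C : Subgroup G)
    {y z : G} (hyC : y ∈ C) (hzC : z ∈ C) (hy : orderOf y = p) (hz : orderOf z = p) :
    ∃ c ∈ C, ∃ P : Subgroup G, IsPGroup p P ∧ y ∈ P ∧ c * z * c⁻¹ ∈ P := by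
  have isPGroup_zpowers {w : C} (hw : orderOf (w : G) = p) : IsPGroup p (Subgroup.zpowers w) :=
    IsPGroup.of_card (by rw [Nat.card_zpowers, ← Subgroup.orderOf_coe, hw, pow_one])
  obtain ⟨Qy, hQy⟩ := (isPGroup_zpowers (w := ⟨y, hyC⟩) hy).exists_le_sylow
  obtain ⟨Qz, hQz⟩ := (isPGroup_zpowers (w := ⟨z, hzC⟩) hz).exists_le_sylow
  obtain ⟨c, hc⟩ := MulAction.exists_smul_eq C Qz Qy
  have hcz : c * ⟨z, hzC⟩ * c⁻¹ ∈ (Qy : Subgroup C) := by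
    rw [← hc, Sylow.smul_def, Sylow.pointwise_smul_def]
    exact Subgroup.smul_mem_pointwise_smul _ (MulAut.conj c) _ (hQz (Subgroup.mem_zpowers _))
  exact ⟨c, c.2, (Qy : Subgroup C).map C.subtype, Qy.2.map C.subtype,
    ⟨_, hQy (Subgroup.mem_zpowers _), rfl⟩, ⟨_, hcz, rfl⟩⟩

namespace IsStronglyPEmbedded

variable {p : ℕ} {H : Subgroup G}

lemma mem_of_conj_mem (hH : IsStronglyPEmbedded p H) {x g : G} (hx : x ∈ H)
    (hpx : p ∣ orderOf x) (hgx : g * x * g⁻¹ ∈ H) : g ∈ H := by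
  rw [← H.inv_mem_iff]
  by_contra hg
  refine hH.2.2 g⁻¹ hg (hpx.trans ?_)
  have hmem : x ∈ H ⊓ conjSub g⁻¹ H := ⟨hx, mem_conjSub_iff.mpr (by rwa [inv_inv])⟩
  rw [← Subgroup.orderOf_mk x hmem]
  exact orderOf_dvd_natCard _

lemma le_of_isPGroup [Finite G] (hH : IsStronglyPEmbedded p H) (hp : p.Prime) {P : Subgroup G}
    (hP : IsPGroup p P) {y : G} (hyP : y ∈ P) (hyH : y ∈ H) (hpy : p ∣ orderOf y) : P ≤ H := by
  have : Fact p.Prime := ⟨hp⟩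
  have : Group.IsNilpotent P := hP.isNilpotent
  suffices hK : H.subgroupOf P = ⊤ from
    fun z hz => Subgroup.mem_subgroupOf.mp (hK ▸ Subgroup.mem_top (⟨z, hz⟩ : P))
  by_contra hK
  obtain ⟨u, huN, huH⟩ :=
    SetLike.exists_of_lt (Group.normalizerCondition_of_isNilpotent _ (lt_top_iff_ne_top.mpr hK))
  have hconj : (u : G) * y * (u : G)⁻¹ ∈ H :=
    (Subgroup.mem_normalizer_iff.mp huN ⟨y, hyP⟩).mp hyH
  exact huH (hH.mem_of_conj_mem hyH hpy hconj)

end IsStronglyPEmbedded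

end

theorem fusion_control_of_strongly_p_embedded_general {G : Type*} [Group G] [Finite G]
    (p : ℕ) (hp : p.Prime) (H : Subgroup G)
    (hH : IsStronglyPEmbedded p H)
    (hcent : ∀ t ∈ H, orderOf t = 2 → p ∣ Nat.card ↥(H ⊓ Subgroup.centralizer {t})) :
    ∀ t ∈ H, orderOf t = 2 → ∀ g : G, g * t * g⁻¹ ∈ H →
      ∃ h ∈ H, h * t * h⁻¹ = g * t * g⁻¹ := by
  intro t ht ht2 g hs
  have : Fact p.Prime := ⟨hp⟩
  set s := g * t * g⁻¹
  obtain ⟨x, ⟨hxH, hxt⟩, hx⟩ := exists_mem_orderOf_eq_of_dvd_card (hcent t ht ht2)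
  obtain ⟨y, ⟨hyH, hys⟩, hy⟩ :=
    exists_mem_orderOf_eq_of_dvd_card (hcent s hs (by rw [orderOf_conj, ht2]))
  obtain ⟨c, hcs, P, hP, hyP, hxP⟩ := exists_conj_mem_common_pSubgroup _ hys
    (conj_mem_centralizer_conj hxt) hy (by rw [orderOf_conj, hx])
  have hPH : P ≤ H := hH.le_of_isPGroup hp hP hyP hyH hy.symm.dvd
  have hcgH : c * g ∈ H :=
    hH.mem_of_conj_mem hxH hx.symm.dvd (by simpa [mul_assoc] using hPH hxP)
  refine ⟨c * g, hcgH, ?_⟩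
  calc c * g * t * (c * g)⁻¹ = c * s * c⁻¹ := by simp only [s]; group
    _ = s := by rw [Subgroup.mem_centralizer_singleton_iff.mp hcs, mul_inv_cancel_right]

theorem fusion_control_of_strongly_p_embedded {G : Type*} [Group G] [Finite G]
    (p : ℕ) (hp : p.Prime) (hodd : Odd p) (H : Subgroup G)
    (hH : IsStronglyPEmbedded p H)
    (hcent : ∀ t ∈ H, orderOf t = 2 → p ∣ Nat.card ↥(H ⊓ Subgroup.centralizer {t})) :
    ∀ t ∈ H, orderOf t = 2 → ∀ g : G, g * t * g⁻¹ ∈ H →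
      ∃ h ∈ H, h * t * h⁻¹ = g * t * g⁻¹ :=
  fusion_control_of_strongly_p_embedded_general p hp H hH hcent
end

section
/- Let $p$ be an odd prime, $G$ a finite group, and $H$ a strongly $p$-embedded subgroup of $G$. Let $t \in H$ be an involution with $t^G \cap H = t^H$, and let $F \le H$ be a subgroup containing $t$. If $N_G(F) \not\le H$, then $C_G(t) \not\le H$. -/
/-! A Frattini argument: an element `g ∈ N_G(F) \ H` moves `t` to `tᵍ ∈ F ≤ H`, control of fusion
gives `h ∈ H` with `tʰ = tᵍ`, and then `h⁻¹ g` centralizes `t` but lies outside `H`. -/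

namespace Subgroup

variable {G : Type*} [Group G]

theorem inv_mul_mem_centralizer_singleton_of_conj_eq {g h t : G}
    (hgt : h * t * h⁻¹ = g * t * g⁻¹) : h⁻¹ * g ∈ centralizer {t} := by
  rw [mem_centralizer_singleton_iff]
  calc h⁻¹ * g * t = h⁻¹ * (g * t * g⁻¹) * g := by group
    _ = h⁻¹ * (h * t * h⁻¹) * g := by rw [hgt]
    _ = t * (h⁻¹ * g) := by group

theorem centralizer_singleton_not_le_of_conj_eq {H : Subgroup G} {g h t : G}
    (hg : g ∉ H) (hh : h ∈ H) (hgt : h * t * h⁻¹ = g * t * g⁻¹) :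
    ¬ centralizer {t} ≤ H := fun hle ↦
  hg <| by simpa using H.mul_mem hh (hle (inv_mul_mem_centralizer_singleton_of_conj_eq hgt))

end Subgroup

theorem centralizer_not_le_of_normalizer_not_le_general {G : Type*} [Group G]
    (H : Subgroup G)
    (t : G)
    (hfus : ∀ g : G, g * t * g⁻¹ ∈ H → ∃ h ∈ H, h * t * h⁻¹ = g * t * g⁻¹)
    (F : Subgroup G) (hFH : F ≤ H) (htF : t ∈ F)
    (hNF : ¬ Subgroup.normalizer (F : Set G) ≤ H) :
    ¬ Subgroup.centralizer {t} ≤ H := by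
  obtain ⟨g, hgN, hgH⟩ := SetLike.not_le_iff_exists.mp hNF
  have hconj : g * t * g⁻¹ ∈ H := hFH ((Subgroup.mem_normalizer_iff.mp hgN t).mp htF)
  obtain ⟨h, hhH, hht⟩ := hfus g hconj
  exact Subgroup.centralizer_singleton_not_le_of_conj_eq hgH hhH hht

theorem centralizer_not_le_of_normalizer_not_le {G : Type*} [Group G] [Finite G]
    (p : ℕ) (hp : p.Prime) (hodd : Odd p) (H : Subgroup G)
    (hH : IsStronglyPEmbedded p H)
    (t : G) (htH : t ∈ H) (ht : orderOf t = 2)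
    (hfus : ∀ g : G, g * t * g⁻¹ ∈ H → ∃ h ∈ H, h * t * h⁻¹ = g * t * g⁻¹)
    (F : Subgroup G) (hFH : F ≤ H) (htF : t ∈ F)
    (hNF : ¬ Subgroup.normalizer (F : Set G) ≤ H) :
    ¬ Subgroup.centralizer {t} ≤ H :=
  centralizer_not_le_of_normalizer_not_le_general H t hfus F hFH htF hNF
end

section
/- Let $G$ be a finite group and $S$ a Sylow 2-subgroup of $G$. Then at least one of the following holds: (i) $O^2(G) \ne G$; (ii) $\Omega_1(Z(S)) \le \Phi(S)$; (iii) $N_G(S)$ acts non-trivially on $\Omega_1(Z(S))$. -/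
/-- `O^2(G)`: the smallest normal subgroup with 2-group quotient, equivalently (in a finite
group) the subgroup generated by the elements of odd order. -/
def twoResidual (G : Type*) [Group G] : Subgroup G :=
  Subgroup.closure {x : G | Odd (orderOf x)}

/-- `Ω₁(K)`: the subgroup generated by the involutions of `K`. -/
def omega1 {G : Type*} [Group G] (K : Subgroup G) : Subgroup G :=
  Subgroup.closure {x : G | x ∈ K ∧ x ^ 2 = 1}

/-- `Z(S)` as a subgroup of `G`, for `S : Subgroup G`. -/
def centerIn {G : Type*} [Group G] (S : Subgroup G) : Subgroup G :=
  S ⊓ Subgroup.centralizer (S : Set G)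


/-!
Suppose all three alternatives fail. Pick an involution `u ∈ Z(S)` outside `Φ(S)`, a maximal
subgroup `M` of `S` missing `u`, and the character `χ : S → ±1` with kernel `M`. Since `G = O²(G)`,
the transfer `G → ±1` of `χ` is trivial. On the other hand, for an involution the transfer is the
product of `χ(q⁻¹ u q)` over the cosets `qS` fixed by `u`. The cosets contributing `-1` form a set
permuted by `S`, and since `N_G(S)` centralizes `u`, every `S`-fixed coset `nS` (`n ∈ N_G(S)`)
contributes `χ(u) = -1`. Hence that set has size `≡ |G : S| ≡ 1 (mod 2)`, and the transfer of `u`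
is `-1`.
-/

open Subgroup

theorem twoResidual_le_ker {G A : Type*} [Group G] [Group A] (hA : IsPGroup 2 A) (φ : G →* A) :
    twoResidual G ≤ φ.ker := by
  refine (closure_le _).mpr fun x (hx : Odd (orderOf x)) => ?_
  obtain ⟨n, hn⟩ := hA (φ x)
  have hcop : Nat.Coprime (2 ^ n) (orderOf x) :=
    Nat.Coprime.pow_left _ (Nat.prime_two.coprime_iff_not_dvd.mpr hx.not_two_dvd_nat)
  exact orderOf_eq_one_iff.mp <| Nat.eq_one_of_dvd_coprimes hcop
    (orderOf_dvd_of_pow_eq_one hn) (orderOf_map_dvd φ x)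

theorem mem_frattini_iff {G : Type*} [Group G] {x : G} :
    x ∈ frattini G ↔ ∀ M : Subgroup G, IsCoatom M → x ∈ M := by
  simp [frattini, Order.radical, mem_iInf]

theorem IsPGroup.index_eq_of_isCoatom {p : ℕ} [Fact p.Prime] {P : Type*} [Group P] [Finite P]
    (hP : IsPGroup p P) {M : Subgroup P} (hM : IsCoatom M) : M.index = p := by
  obtain ⟨n, hn⟩ := IsPGroup.iff_card.mp (hP.to_subgroup M)
  obtain ⟨k, hk⟩ := hP.index M
  have hk0 : k ≠ 0 := by
    rintro rfl
    exact hM.1 (index_eq_one.mp (by simpa using hk))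
  have hcard := M.card_mul_index
  have hdvd : p ^ (n + 1) ∣ Nat.card P := by
    rw [← hcard, hn, hk, pow_succ]
    exact mul_dvd_mul_left _ (dvd_pow_self p hk0)
  obtain ⟨K, hK, hMK⟩ := Sylow.exists_subgroup_card_pow_succ hdvd hn
  have hMK' : M < K := lt_of_le_of_ne hMK fun h => by
    rw [← h, hn] at hK
    exact (Nat.pow_lt_pow_succ (Fact.out : p.Prime).one_lt).ne hK
  rw [hM.2 K hMK', card_top, ← hcard, hn, pow_succ] at hK
  exact Nat.eq_of_mul_eq_mul_left (pow_pos (Fact.out : p.Prime).pos n) hK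

open Classical in
noncomputable def Subgroup.indexTwoCharacter {G : Type*} [Group G] (M : Subgroup G)
    (hM : M.index = 2) : G →* ℤˣ where
  toFun g := if g ∈ M then 1 else -1
  map_one' := if_pos M.one_mem
  map_mul' a b := by
    simp only [mul_mem_iff_of_index_two hM]
    split_ifs <;> simp_all

theorem Subgroup.indexTwoCharacter_apply_of_notMem {G : Type*} [Group G] {M : Subgroup G}
    (hM : M.index = 2) {g : G} (hg : g ∉ M) : M.indexTwoCharacter hM g = -1 :=
  if_neg hg

namespace MonoidHom

variable {G A : Type*} [Group G] [CommGroup A] {H : Subgroup G} (ϕ : H →* A)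

open Classical in
noncomputable def extendByOne (x : G) : A := if h : x ∈ H then ϕ ⟨x, h⟩ else 1

theorem extendByOne_of_mem {x : G} (hx : x ∈ H) : ϕ.extendByOne x = ϕ ⟨x, hx⟩ := dif_pos hx

theorem extendByOne_of_notMem {x : G} (hx : x ∉ H) : ϕ.extendByOne x = 1 := dif_neg hx

theorem extendByOne_mul {x y : G} (hx : x ∈ H) (hy : y ∈ H) :
    ϕ.extendByOne (x * y) = ϕ.extendByOne x * ϕ.extendByOne y := by
  rw [extendByOne_of_mem ϕ hx, extendByOne_of_mem ϕ hy, extendByOne_of_mem ϕ (H.mul_mem hx hy),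
    ← map_mul]
  rfl

theorem extendByOne_conj {h : G} (hh : h ∈ H) (x : G) :
    ϕ.extendByOne (h⁻¹ * x * h) = ϕ.extendByOne x := by
  by_cases hx : x ∈ H
  · have hx' : h⁻¹ * x * h ∈ H := H.mul_mem (H.mul_mem (H.inv_mem hh) hx) hh
    rw [extendByOne_of_mem ϕ hx, extendByOne_of_mem ϕ hx']
    change ϕ (⟨h, hh⟩⁻¹ * ⟨x, hx⟩ * ⟨h, hh⟩) = _
    rw [map_mul, map_mul, mul_comm, ← mul_assoc, map_inv, mul_inv_cancel, one_mul]
  · have hx' : h⁻¹ * x * h ∉ H := fun h' => hx (by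
      simpa [mul_assoc] using H.mul_mem (H.mul_mem hh h') (H.inv_mem hh))
    rw [extendByOne_of_notMem ϕ hx, extendByOne_of_notMem ϕ hx']

theorem extendByOne_conj_out (g a : G) :
    ϕ.extendByOne ((a : G ⧸ H).out⁻¹ * g * (a : G ⧸ H).out) = ϕ.extendByOne (a⁻¹ * g * a) := by
  obtain ⟨h, hout⟩ := QuotientGroup.mk_out_eq_mul H a
  rw [hout, ← ϕ.extendByOne_conj h.2 (a⁻¹ * g * a)]
  group

theorem extendByOne_conj_out_smul {g : G} (hg : g ∈ centralizer (H : Set G)) (h : H)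
    (q : G ⧸ H) :
    ϕ.extendByOne ((h • q).out⁻¹ * g * (h • q).out) = ϕ.extendByOne (q.out⁻¹ * g * q.out) := by
  induction q using QuotientGroup.induction_on with | H a => ?_
  have hq : h • (a : G ⧸ H) = ((h * a : G) : G ⧸ H) := rfl
  rw [hq, extendByOne_conj_out, extendByOne_conj_out, mul_assoc _ g, ← mul_assoc g,
    ← mem_centralizer_iff.mp hg h h.2]
  group

theorem transfer_eq_prod_extendByOne_transversal [H.FiniteIndex] [Fintype (G ⧸ H)]
    (T : H.LeftTransversal) (g : G) :
    transfer ϕ g = ∏ q : G ⧸ H,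
      ϕ.extendByOne ((T.2.leftQuotientEquiv q : G)⁻¹ * (g * T.2.leftQuotientEquiv (g⁻¹ • q))) := by
  rw [transfer_def ϕ T g, leftTransversals.diff]
  congr 1
  · exact congrArg (@Finset.univ _) (Subsingleton.elim _ _)
  funext q
  rw [← smul_eq_mul g, ← smul_apply_eq_smul_apply_inv_smul]
  exact (ϕ.extendByOne_of_mem _).symm

/- Computed with any transversal `r`: the map `q ↦ g • q` pairs up the cosets not fixed by `g`,
and the factors of such a pair multiply to `ϕ ((r q)⁻¹ * g ^ 2 * r q) = 1`. -/
theorem transfer_eq_prod_extendByOne_of_sq_eq_one [H.FiniteIndex] [Fintype (G ⧸ H)] {g : G}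
    (hg : g ^ 2 = 1) :
    transfer ϕ g = ∏ q : G ⧸ H, ϕ.extendByOne (q.out⁻¹ * g * q.out) := by
  obtain ⟨r, hr, htransfer⟩ : ∃ r : G ⧸ H → G, (∀ q, (r q : G ⧸ H) = q) ∧
      transfer ϕ g = ∏ q : G ⧸ H, ϕ.extendByOne ((r q)⁻¹ * (g * r (g⁻¹ • q))) :=
    let T : H.LeftTransversal := default
    ⟨_, T.2.quotientGroupMk_leftQuotientEquiv, ϕ.transfer_eq_prod_extendByOne_transversal T g⟩
  have hginv : g⁻¹ = g := by rw [inv_eq_iff_mul_eq_one, ← sq, hg]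
  have hgg : ∀ q : G ⧸ H, g • g • q = q := fun q => by rw [smul_smul, ← sq, hg, one_smul]
  have hmem : ∀ q, (r q)⁻¹ * (g * r (g • q)) ∈ H := fun q =>
    QuotientGroup.eq.mp (by rw [← smul_eq_mul, ← MulAction.Quotient.smul_mk, hr, hr, hgg])
  have hfixed : ∀ q : G ⧸ H,
      ϕ.extendByOne ((r q)⁻¹ * (g * r q)) = ϕ.extendByOne (q.out⁻¹ * g * q.out) := fun q => by
    simpa only [hr, mul_assoc] using (ϕ.extendByOne_conj_out g (r q)).symm
  have hmoved : ∀ q : G ⧸ H, g • q ≠ q → ϕ.extendByOne (q.out⁻¹ * g * q.out) = 1 :=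
    fun q hq => by
      refine hfixed q ▸ ϕ.extendByOne_of_notMem fun h => hq ?_
      rw [← hr q, MulAction.Quotient.smul_mk, smul_eq_mul, eq_comm, QuotientGroup.eq]
      exact h
  rw [htransfer, hginv, ← div_eq_one, ← Finset.prod_div_distrib]
  refine Finset.prod_ninvolution (g • ·) (fun q => ?_) (fun q hq hgq => hq ?_)
    (fun _ => Finset.mem_univ _) hgg
  · by_cases hq : g • q = q
    · simp only [hq, hfixed, div_self', one_mul]
    · rw [hmoved q hq, hmoved (g • q) (by rwa [hgg, ne_comm]), div_one, div_one,
        ← ϕ.extendByOne_mul (hmem q) (hmem _), hgg]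
      have hcancel : (r q)⁻¹ * (g * r (g • q)) * ((r (g • q))⁻¹ * (g * r q)) = 1 := by
        simp only [mul_assoc, mul_inv_cancel_left]
        rw [← mul_assoc g, ← sq, hg, one_mul, inv_mul_cancel]
      rw [hcancel, ϕ.extendByOne_of_mem H.one_mem]
      exact ϕ.map_one
  · rw [hgq, hfixed, div_self']

end MonoidHom

theorem Int.units_prod_eq_neg_one_pow {ι : Type*} [Fintype ι] (f : ι → ℤˣ) :
    ∏ i, f i = (-1) ^ Nat.card {i // f i = -1} := by
  classical
  rw [Nat.card_eq_fintype_card, Fintype.card_subtype,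
    ← Finset.prod_filter_mul_prod_filter_not Finset.univ (f · = -1),
    Finset.prod_congr rfl fun i hi => (Finset.mem_filter.mp hi).2, Finset.prod_const,
    Finset.prod_eq_one fun i hi => (Int.units_eq_one_or _).resolve_right (Finset.mem_filter.mp hi).2,
    mul_one]

theorem IsPGroup.card_subMulAction_modEq {p : ℕ} [Fact p.Prime] {P α : Type*} [Group P]
    [MulAction P α] [Finite α] (hP : IsPGroup p P) (X : SubMulAction P α)
    (hX : MulAction.fixedPoints P α ⊆ X) : Nat.card X ≡ Nat.card α [MOD p] := by
  let e : MulAction.fixedPoints P X ≃ MulAction.fixedPoints P α :=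
    { toFun := fun x => ⟨x.1, fun g => congrArg Subtype.val (x.2 g)⟩
      invFun := fun y => ⟨⟨y.1, hX y.2⟩, fun g => Subtype.ext (y.2 g)⟩ }
  calc Nat.card X ≡ Nat.card (MulAction.fixedPoints P X) [MOD p] :=
        hP.card_modEq_card_fixedPoints X
    _ = Nat.card (MulAction.fixedPoints P α) := Nat.card_congr e
    _ ≡ Nat.card α [MOD p] := (hP.card_modEq_card_fixedPoints α).symm

theorem Sylow.transfer_eq_neg_one_of_mem_centralizer_normalizer {G : Type*} [Group G] [Finite G]
    (S : Sylow 2 G) (χ : (S : Subgroup G) →* ℤˣ) {u : G} (huS : u ∈ S) (hu2 : u ^ 2 = 1)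
    (huN : u ∈ centralizer (normalizer (S : Set G) : Set G)) (hχu : χ ⟨u, huS⟩ = -1) :
    MonoidHom.transfer χ u = -1 := by
  let := Fintype.ofFinite (G ⧸ (S : Subgroup G))
  have huS' : u ∈ centralizer (S : Set G) := centralizer_le le_normalizer huN
  let X : SubMulAction S (G ⧸ (S : Subgroup G)) :=
    { carrier := {q | χ.extendByOne (q.out⁻¹ * u * q.out) = -1}
      smul_mem' := fun s q hq => (χ.extendByOne_conj_out_smul huS' s q).trans hq }
  have hfix : MulAction.fixedPoints S (G ⧸ (S : Subgroup G)) ⊆ X := by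
    intro q hq
    induction q using QuotientGroup.induction_on with | H a => ?_
    have ha := Sylow.mem_fixedPoints_mul_left_cosets_iff_mem_normalizer.mp hq
    change χ.extendByOne _ = -1
    rw [χ.extendByOne_conj_out, mul_assoc, ← mem_centralizer_iff.mp huN a ha,
      inv_mul_cancel_left, χ.extendByOne_of_mem huS, hχu]
  have hodd : Odd (Nat.card X) := by
    have hmod := S.isPGroup'.card_subMulAction_modEq X hfix
    rw [← index_eq_card] at hmod
    rw [Nat.odd_iff, hmod]
    exact Nat.two_dvd_ne_zero.mp S.not_dvd_index
  rw [χ.transfer_eq_prod_extendByOne_of_sq_eq_one hu2, Int.units_prod_eq_neg_one_pow]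
  exact hodd.neg_one_pow

theorem thompson_transfer_consequence {G : Type*} [Group G] [Finite G]
    (S : Sylow 2 G) :
    twoResidual G ≠ ⊤ ∨
    omega1 (centerIn (S : Subgroup G)) ≤
      Subgroup.map (S : Subgroup G).subtype (frattini ↥(S : Subgroup G)) ∨
    ∃ g ∈ Subgroup.normalizer ((S : Subgroup G) : Set G), ∃ x ∈ omega1 (centerIn (S : Subgroup G)),
      g * x * g⁻¹ ≠ x := by
  by_contra! h
  obtain ⟨hres, hΦ, hN⟩ := h
  obtain ⟨u, ⟨huZ, hu2⟩, huΦ⟩ := Set.not_subset.mp (mt (closure_le _).mpr hΦ)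
  have huS : u ∈ S := huZ.1
  obtain ⟨M, hM, huM⟩ : ∃ M, IsCoatom M ∧ (⟨u, huS⟩ : (S : Subgroup G)) ∉ M := by
    by_contra! h
    exact huΦ ⟨_, mem_frattini_iff.mpr h, rfl⟩
  have huN : u ∈ centralizer (normalizer (S : Set G) : Set G) :=
    mem_centralizer_iff.mpr fun n hn =>
      mul_inv_eq_iff_eq_mul.mp (hN n hn u (subset_closure ⟨huZ, hu2⟩))
  let χ := M.indexTwoCharacter (S.isPGroup'.index_eq_of_isCoatom hM)
  have hunits : IsPGroup 2 ℤˣ := fun x => ⟨1, by rw [pow_one, Int.units_sq]⟩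
  have htrivial : MonoidHom.transfer χ u = 1 :=
    twoResidual_le_ker hunits _ (hres ▸ mem_top u)
  have hnontrivial : MonoidHom.transfer χ u = -1 :=
    S.transfer_eq_neg_one_of_mem_centralizer_normalizer χ huS hu2 huN
      (M.indexTwoCharacter_apply_of_notMem _ huM)
  exact absurd (htrivial.symm.trans hnontrivial) (by decide)
end
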